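/- Let Σ_A be a nonempty two-sided subshift of finite type on M symbols with topological entropy h. Then Σ_A contains a periodic point of period at most 1 + M·e^{1-h}. -/

import Mathlib

/-!
Let `g` be the least period and `j = g - 1`, so the transition graph has no closed walk of length
at most `j`. A legal word of length `j` then never repeats a symbol, and it is determined by its set
of symbols: read along another legal word on the same symbols, an edge going backwards in the first
word would close a walk of length at most `j`, so both words list the symbols in the same order.
Hence there are at most `M.choose j ≤ (M e / j) ^ j` legal words of length `j`, and Fekete's lemma
gives `h ≤ log (M e / j)`, that is `j ≤ M e^{1-h}`.
-/

open Filter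

/-- The shift map on two-sided sequences over `M` symbols. -/
def shiftMap (M : ℕ) : (ℤ → Fin M) → (ℤ → Fin M) := fun x i => x (i + 1)

/-- The two-sided subshift of finite type associated to the 0-1 transition matrix `A`. -/
def SFT {M : ℕ} (A : Fin M → Fin M → Prop) : Set (ℤ → Fin M) :=
  {x | ∀ i : ℤ, A (x i) (x (i + 1))}

/-- The set of legal words of length `k` in the subshift `Σ_A`. -/
def legalWords {M : ℕ} (A : Fin M → Fin M → Prop) (k : ℕ) : Set (Fin k → Fin M) :=
  {w | ∃ x ∈ SFT A, ∀ i : Fin k, x ((i : ℕ) : ℤ) = w i}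

/-- Topological entropy of the subshift `Σ_A`, computed as the exponential growth rate of the
number of legal words. -/
noncomputable def sftEntropy {M : ℕ} (A : Fin M → Fin M → Prop) : ℝ :=
  Filter.atTop.limsup fun k : ℕ => Real.log ((legalWords A k).ncard) / k

theorem Nat.choose_le_mul_exp_one_div_pow (n k : ℕ) :
    (n.choose k : ℝ) ≤ (n * Real.exp 1 / k) ^ k := by
  have hk : (0 : ℝ) < (k : ℝ) ^ k := by exact_mod_cast Nat.pow_self_pos
  calc (n.choose k : ℝ) ≤ n ^ k / k.factorial := Nat.choose_le_pow_div k n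
    _ = n ^ k / k ^ k * (k ^ k / k.factorial) := by field_simp
    _ ≤ n ^ k / k ^ k * Real.exp k := by
      gcongr
      exact Real.pow_div_factorial_le_exp _ k.cast_nonneg k
    _ = (n * Real.exp 1 / k) ^ k := by rw [← Real.exp_one_pow]; ring

def HasPeriodicPoint {M : ℕ} (A : Fin M → Fin M → Prop) (k : ℕ) : Prop :=
  ∃ x ∈ SFT A, (shiftMap M)^[k] x = x

section

variable {M : ℕ} {A : Fin M → Fin M → Prop}

theorem shiftMap_iterate_apply (n : ℕ) (x : ℤ → Fin M) (i : ℤ) :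
    (shiftMap M)^[n] x i = x (i + n) := by
  induction n generalizing x with
  | zero => simp
  | succ n ih => rw [Function.iterate_succ_apply, ih, shiftMap]; push_cast; ring_nf

theorem shiftMap_iterate_mem_SFT {x : ℤ → Fin M} (hx : x ∈ SFT A) (n : ℕ) :
    (shiftMap M)^[n] x ∈ SFT A := fun i => by
  simpa only [shiftMap_iterate_apply, add_right_comm] using hx (i + n)

theorem hasPeriodicPoint_of_cycle {d : ℕ} (u : ZMod d → Fin M)
    (hu : ∀ r, A (u r) (u (r + 1))) : HasPeriodicPoint A d :=
  ⟨fun i => u i, fun i => by simpa using hu i, funext fun i => by simp [shiftMap_iterate_apply]⟩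

theorem hasPeriodicPoint_of_edge {x : ℤ → Fin M} (hx : x ∈ SFT A) {a b : ℕ} (hab : a ≤ b)
    (h : A (x b) (x a)) : HasPeriodicPoint A (b - a + 1) := by
  refine hasPeriodicPoint_of_cycle (fun r : ZMod (b - a + 1) => x (a + r.val)) fun r => ?_
  have hr := ZMod.val_lt r
  rw [ZMod.val_add, ZMod.val_one_eq_one_mod, Nat.add_mod_mod]
  rcases Nat.lt_or_ge (r.val + 1) (b - a + 1) with hlt | hge
  · rw [Nat.mod_eq_of_lt hlt]
    convert hx (a + r.val) using 2
    push_cast; ring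
  · rw [show r.val + 1 = b - a + 1 by omega, Nat.mod_self]
    convert h using 2
    · omega
    · simp

theorem legalWords_nonempty (hne : (SFT A).Nonempty) (n : ℕ) : (legalWords A n).Nonempty :=
  let ⟨x, hx⟩ := hne
  ⟨fun i => x i, x, hx, fun _ => rfl⟩

theorem ncard_legalWords_pos (hne : (SFT A).Nonempty) (n : ℕ) : 0 < (legalWords A n).ncard :=
  (Set.ncard_pos (Set.toFinite _)).2 (legalWords_nonempty hne n)

variable (A) in
theorem ncard_legalWords_add_le (m n : ℕ) :
    (legalWords A (m + n)).ncard ≤ (legalWords A m).ncard * (legalWords A n).ncard := by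
  rw [← Set.ncard_prod]
  refine Set.ncard_le_ncard_of_injOn (fun w => (w ∘ Fin.castAdd n, w ∘ Fin.natAdd m)) ?_ ?_
  · rintro w ⟨x, hx, hxw⟩
    refine ⟨⟨x, hx, fun i => hxw (Fin.castAdd n i)⟩,
      (shiftMap M)^[m] x, shiftMap_iterate_mem_SFT hx m, fun i => ?_⟩
    change (shiftMap M)^[m] x i = w (Fin.natAdd m i)
    rw [shiftMap_iterate_apply, ← hxw, Fin.val_natAdd]
    push_cast; ring_nf
  · intro w _ w' _ h
    rw [← Fin.append_castAdd_natAdd (f := w), ← Fin.append_castAdd_natAdd (f := w')]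
    simp only [Prod.mk.injEq] at h
    exact congrArg₂ Fin.append h.1 h.2

theorem sftEntropy_le_log_ncard_div (hne : (SFT A).Nonempty) {n : ℕ} (hn : n ≠ 0) :
    sftEntropy A ≤ Real.log (legalWords A n).ncard / n := by
  have hsub : Subadditive fun n => Real.log (legalWords A n).ncard := fun m n => by
    have hpos (n : ℕ) : (0 : ℝ) < (legalWords A n).ncard := mod_cast ncard_legalWords_pos hne n
    rw [← Real.log_mul (hpos m).ne' (hpos n).ne']
    exact Real.log_le_log (hpos _) (mod_cast ncard_legalWords_add_le A m n)
  have hbdd : BddBelow (Set.range fun n => Real.log (legalWords A n).ncard / n) :=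
    ⟨0, by rintro _ ⟨n, rfl⟩; positivity⟩
  rw [sftEntropy, (hsub.tendsto_lim hbdd).limsup_eq]
  exact hsub.lim_le_div hbdd hn

theorem injective_of_mem_legalWords {j : ℕ}
    (hshort : ∀ k, 0 < k → k ≤ j → ¬HasPeriodicPoint A k) {w : Fin j → Fin M}
    (hw : w ∈ legalWords A j) : Function.Injective w := by
  obtain ⟨x, hx, hxw⟩ := hw
  intro a b hab
  by_contra hne
  wlog hlt : a < b generalizing a b
  · exact this hab.symm (Ne.symm hne) (lt_of_le_of_ne (not_lt.1 hlt) (Ne.symm hne))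
  have hba : 1 ≤ (b : ℕ) := by omega
  have hedge : A (x (b - 1 : ℕ)) (x a) := by
    rw [hxw a, hab, ← hxw b]
    convert hx ((b - 1 : ℕ) : ℤ) using 2
    push_cast [hba]; ring
  exact hshort _ (by omega) (by omega)
    (hasPeriodicPoint_of_edge hx (by omega : (a : ℕ) ≤ b - 1) hedge)

theorem eq_of_mem_legalWords_of_image_eq {j : ℕ}
    (hshort : ∀ k, 0 < k → k ≤ j → ¬HasPeriodicPoint A k) {w w' : Fin j → Fin M}
    (hw : w ∈ legalWords A j) (hw' : w' ∈ legalWords A j)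
    (himg : Finset.univ.image w = Finset.univ.image w') : w = w' := by
  have hrange : Set.range w = Set.range w' := by
    simpa using congrArg (fun s : Finset (Fin M) => (s : Set (Fin M))) himg
  obtain ⟨π, rfl⟩ := Set.range_subset_range_iff_exists_comp.1 hrange.ge
  suffices StrictMono π by rw [this.eq_id]; rfl
  obtain ⟨x, hx, hxw⟩ := hw
  obtain ⟨x', hx', hxw'⟩ := hw'
  cases j with
  | zero => exact fun i => i.elim0
  | succ j =>
    refine Fin.strictMono_iff_lt_succ.2 fun i => not_le.1 fun hle => ?_
    have hedge : A (x (π i.castSucc : ℕ)) (x (π i.succ : ℕ)) := by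
      rw [hxw, hxw, ← Function.comp_apply (f := w), ← Function.comp_apply (f := w), ← hxw',
        ← hxw']
      simpa using hx' i.castSucc
    exact hshort _ (by omega) (by omega) (hasPeriodicPoint_of_edge hx hle hedge)

theorem ncard_legalWords_le_choose {j : ℕ}
    (hshort : ∀ k, 0 < k → k ≤ j → ¬HasPeriodicPoint A k) :
    (legalWords A j).ncard ≤ M.choose j := by
  calc (legalWords A j).ncard
      ≤ ((Finset.univ : Finset (Fin M)).powersetCard j : Set (Finset (Fin M))).ncard := by
        refine Set.ncard_le_ncard_of_injOn (fun w => Finset.univ.image w) (fun w hw => ?_)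
          (fun w hw w' hw' h => eq_of_mem_legalWords_of_image_eq hshort hw hw' h)
        simp [Finset.card_image_of_injective _ (injective_of_mem_legalWords hshort hw)]
    _ = M.choose j := by simp

theorem natCast_le_mul_exp_one_sub_sftEntropy (hne : (SFT A).Nonempty) {j : ℕ} (hj : 0 < j)
    (hL : (legalWords A j).ncard ≤ M.choose j) :
    (j : ℝ) ≤ M * Real.exp (1 - sftEntropy A) := by
  have hM : 0 < M := (hne.some 0).pos
  have hc : 0 < (M * Real.exp 1 / j : ℝ) := by positivity
  have hL' : ((legalWords A j).ncard : ℝ) ≤ (M * Real.exp 1 / j) ^ j :=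
    (Nat.cast_le.2 hL).trans (Nat.choose_le_mul_exp_one_div_pow M j)
  have hh : sftEntropy A ≤ Real.log (M * Real.exp 1 / j) := calc
    sftEntropy A ≤ Real.log (legalWords A j).ncard / j :=
      sftEntropy_le_log_ncard_div hne hj.ne'
    _ ≤ Real.log ((M * Real.exp 1 / j) ^ j) / j := by
      gcongr
      exact_mod_cast ncard_legalWords_pos hne j
    _ = Real.log (M * Real.exp 1 / j) := by rw [Real.log_pow]; field_simp
  calc (j : ℝ) = M * Real.exp 1 / (M * Real.exp 1 / j) := by field_simp
    _ ≤ M * Real.exp 1 / Real.exp (sftEntropy A) := by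
      gcongr
      exact (Real.le_log_iff_exp_le hc).1 hh
    _ = M * Real.exp (1 - sftEntropy A) := by rw [Real.exp_sub]; ring

end

theorem sft_exists_short_periodic_orbit_general {M : ℕ} (A : Fin M → Fin M → Prop)
    (hper : ∃ x ∈ SFT A, ∃ p : ℕ, 0 < p ∧ (shiftMap M)^[p] x = x) :
    ∃ x ∈ SFT A, ∃ k : ℕ, 0 < k ∧
      (k : ℝ) ≤ 1 + M * Real.exp (1 - sftEntropy A) ∧ (shiftMap M)^[k] x = x := by
  classical
  have hex : ∃ p, 0 < p ∧ HasPeriodicPoint A p :=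
    let ⟨x, hx, p, hp, hxp⟩ := hper
    ⟨p, hp, x, hx, hxp⟩
  obtain ⟨hg, x, hx, hxg⟩ := Nat.find_spec hex
  refine ⟨x, hx, Nat.find hex, hg, ?_, hxg⟩
  obtain ⟨j, hgj⟩ := Nat.exists_eq_add_one_of_ne_zero hg.ne'
  have hshort : ∀ k, 0 < k → k ≤ j → ¬HasPeriodicPoint A k :=
    fun k hk hkj h => Nat.find_min hex (by omega) ⟨hk, h⟩
  rw [hgj, Nat.cast_succ, add_comm]
  rcases j.eq_zero_or_pos with rfl | hj
  · rw [Nat.cast_zero, add_zero, le_add_iff_nonneg_right]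
    positivity
  · gcongr
    exact natCast_le_mul_exp_one_sub_sftEntropy ⟨x, hx⟩ hj (ncard_legalWords_le_choose hshort)

/-- **Short periodic orbits in subshifts of finite type.** A nonempty subshift of finite type on
`M` symbols with topological entropy `h` (containing at least one periodic point) contains a
periodic point of period at most `1 + M e^{1-h}`. -/
theorem sft_exists_short_periodic_orbit {M : ℕ} (hM : 0 < M) (A : Fin M → Fin M → Prop)
    (hper : ∃ x ∈ SFT A, ∃ p : ℕ, 0 < p ∧ (shiftMap M)^[p] x = x) :
    ∃ x ∈ SFT A, ∃ k : ℕ, 0 < k ∧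
      (k : ℝ) ≤ 1 + M * Real.exp (1 - sftEntropy A) ∧ (shiftMap M)^[k] x = x :=
  sft_exists_short_periodic_orbit_general A hper
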